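/- arXiv:1209.3509 — 5 statements merged into one kernel-verified Lean document; each statement's English description precedes it below -/
import Mathlib

section
/- A nonempty partition λ has Frobenius coordinates (a_1,…,a_r | b_1,…,b_r) satisfying a_i = b_i − 1 for all i if and only if the number of rows of λ is one more than the number of columns (i.e., the length of λ equals λ_1 + 1) and the partition obtained by deleting the first row and first column of λ (i.e., (λ_2 − 1, …, λ_{ℓ(λ)} − 1)) again has Frobenius coordinates with a_i = b_i − 1 for all i. -/
/-- A list of natural numbers represents a partition if it is weakly decreasing
and all its parts are positive. -/
def IsPartitionL (l : List ℕ) : Prop := l.Chain' (· ≥ ·) ∧ ∀ x ∈ l, 0 < x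

/-- The `i`-th part (0-indexed), with value `0` beyond the length of the list. -/
def pPart (l : List ℕ) (i : ℕ) : ℕ := l.getD i 0

/-- The `i`-th column length (0-indexed): the `i`-th part of the transposed partition. -/
def pConj (l : List ℕ) (i : ℕ) : ℕ := (l.filter (fun x => decide (i < x))).length

/-- The rank of a partition: the number of boxes on the main diagonal, i.e. the number of
(0-indexed) `i` with `λ_{i+1} > i`. -/
def pRank (l : List ℕ) : ℕ := ((List.range l.length).filter (fun i => decide (i < pPart l i))).length

/-- Delete the first row and the first column of a partition. -/
def pRemoveRC (l : List ℕ) : List ℕ :=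
  ((l.drop 1).map (fun x => x - 1)).filter (fun x => decide (0 < x))

/-- The Frobenius coordinate `a_i = λ_i - i + 1` (for `1 ≤ i ≤ rank`); with our 0-indexed
convention, `pFrobA l i = λ_{i+1} - (i+1) + 1` for `0 ≤ i < rank`. -/
def pFrobA (l : List ℕ) (i : ℕ) : ℤ := (pPart l i : ℤ) - i

/-- The Frobenius coordinate `b_i = λ†_i - i + 1` (for `1 ≤ i ≤ rank`), 0-indexed. -/
def pFrobB (l : List ℕ) (i : ℕ) : ℤ := (pConj l i : ℤ) - i

/-- The transpose (conjugate) of a partition, as a list of its column lengths. -/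
def pConjList (l : List ℕ) : List ℕ := (List.range (pPart l 0)).map (fun i => pConj l i)


/-- `μ` has Frobenius coordinates satisfying `a_i = b_i - 1` for all `i`. -/
def QNegOne (l : List ℕ) : Prop := ∀ i < pRank l, pFrobA l i = pFrobB l i - 1

/-!
Counting from `0`, the diagonal positions of `λ` are the `i` with `i < λ_i`, so the condition
`a_i = b_i - 1` says `λ†_i = λ_i + 1` at each of them. At `i = 0` this is `ℓ(λ) = λ_0 + 1`.
Writing `λ = a :: t`, the partition `λ'` obtained by deleting the first row and column has
`λ'_j = t_j - 1` and `λ'†_j = t†_{j+1}`, while `λ†_{j+1} = t†_{j+1} + 1` whenever `j + 1 < a`.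
So the conditions of `λ` at the positions `j + 1` are exactly those of `λ'` at the positions `j`.
-/

theorem lt_length_filter_range_iff {p : ℕ → Bool} (hp : ∀ ⦃i j⦄, i ≤ j → p j → p i)
    {n i : ℕ} : i < ((List.range n).filter p).length ↔ i < n ∧ p i := by
  induction n with
  | zero => simp
  | succ n ih =>
    rw [List.range_succ, List.filter_append, List.length_append]
    by_cases hn : p n
    · have hall : (List.range n).filter p = List.range n :=
        List.filter_eq_self.2 fun k hk => hp (List.mem_range.1 hk).le hn
      simp only [hall, List.length_range, List.filter_cons, hn, if_true, List.filter_nil,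
        List.length_singleton]
      exact ⟨fun hi => ⟨hi, hp (Nat.lt_succ_iff.1 hi) hn⟩, And.left⟩
    · simp only [List.filter_cons, hn, Bool.false_eq_true, if_false, List.filter_nil,
        List.length_nil, add_zero, ih]
      refine ⟨fun h => ⟨h.1.trans (Nat.lt_succ_self n), h.2⟩, fun ⟨hi, hpi⟩ => ⟨?_, hpi⟩⟩
      exact Nat.lt_of_le_of_ne (Nat.lt_succ_iff.1 hi) (by rintro rfl; exact hn hpi)

theorem getD_filter_pos {l : List ℕ} (hl : l.IsChain (· ≥ ·)) (j : ℕ) :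
    (l.filter (0 < ·)).getD j 0 = l.getD j 0 := by
  induction l generalizing j with
  | nil => rfl
  | cons a t ih =>
    rcases Nat.eq_zero_or_pos a with rfl | ha
    · have hzero : ∀ x ∈ 0 :: t, x = 0 := List.forall_mem_cons.2 ⟨rfl, fun x hx =>
        Nat.le_zero.1 (List.rel_of_pairwise_cons (List.isChain_iff_pairwise.1 hl) hx)⟩
      rw [List.filter_eq_nil_iff.2 fun x hx => by simp [hzero x hx], List.getD_nil,
        List.eq_replicate_iff.2 ⟨rfl, hzero⟩, List.getD_eq_getElem?_getD,
        List.getElem?_getD_replicate_default_eq]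
    · rw [List.filter_cons_of_pos (p := fun x => decide (0 < x)) (decide_eq_true ha)]
      cases j with
      | zero => rfl
      | succ j => exact ih hl.tail j

section Partitions

variable {l t : List ℕ} {a i j : ℕ}

theorem pPart_antitone (hl : l.IsChain (· ≥ ·)) : Antitone (pPart l) := by
  intro i j hij
  rcases lt_or_ge j l.length with hj | hj
  · rw [pPart, pPart, l.getD_eq_getElem 0 hj, l.getD_eq_getElem 0 (hij.trans_lt hj)]
    rcases hij.eq_or_lt with rfl | hij
    · rfl
    · exact List.pairwise_iff_getElem.1 (List.isChain_iff_pairwise.1 hl) i j _ hj hij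
  · rw [pPart, List.getD_eq_default _ _ hj]
    exact Nat.zero_le _

theorem lt_length_of_pos_pPart (h : 0 < pPart l i) : i < l.length := by
  by_contra hi
  rw [pPart, List.getD_eq_default _ _ (not_lt.1 hi)] at h
  exact h.false

/-- The diagonal positions form an initial segment, so the rank bounds them. -/
theorem lt_pRank_iff (hl : l.IsChain (· ≥ ·)) : i < pRank l ↔ i < pPart l i := by
  have hdown : ∀ ⦃i j⦄, i ≤ j → decide (j < pPart l j) → decide (i < pPart l i) := by
    intro i j hij h
    simp only [decide_eq_true_eq] at h ⊢
    exact hij.trans_lt (h.trans_le (pPart_antitone hl hij))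
  rw [pRank, lt_length_filter_range_iff hdown, decide_eq_true_eq]
  exact ⟨And.right, fun h => ⟨lt_length_of_pos_pPart (i.zero_le.trans_lt h), h⟩⟩

theorem qNegOne_iff (hl : l.IsChain (· ≥ ·)) :
    QNegOne l ↔ ∀ i, i < pPart l i → pConj l i = pPart l i + 1 := by
  simp only [QNegOne, pFrobA, pFrobB, lt_pRank_iff hl]
  refine forall_congr' fun i => imp_congr_right fun _ => ?_
  omega

theorem pConj_zero (hpos : ∀ x ∈ l, 0 < x) : pConj l 0 = l.length := by
  rw [pConj, List.filter_eq_self.2 fun x hx => decide_eq_true (hpos x hx)]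

theorem pConj_cons_of_lt (h : i < a) : pConj (a :: t) i = pConj t i + 1 := by
  simp [pConj, h]

theorem isChain_map_sub_one (ht : t.IsChain (· ≥ ·)) : (t.map (· - 1)).IsChain (· ≥ ·) :=
  (List.isChain_map _).2 (ht.imp fun _ _ h => Nat.sub_le_sub_right h 1)

theorem isChain_pRemoveRC_cons (ht : t.IsChain (· ≥ ·)) :
    (pRemoveRC (a :: t)).IsChain (· ≥ ·) :=
  List.isChain_iff_pairwise.2 ((List.isChain_iff_pairwise.1 (isChain_map_sub_one ht)).filter _)

theorem pPart_pRemoveRC_cons (ht : t.IsChain (· ≥ ·)) :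
    pPart (pRemoveRC (a :: t)) j = pPart t j - 1 :=
  (getD_filter_pos (isChain_map_sub_one ht) j).trans (t.getD_map 0 (· - 1))

theorem pConj_pRemoveRC_cons : pConj (pRemoveRC (a :: t)) j = pConj t (j + 1) := by
  rw [pConj, pConj, pRemoveRC, List.filter_filter, List.filter_map, List.length_map]
  congr 1
  refine List.filter_congr fun x _ => ?_
  simp only [Function.comp_apply, Bool.and_eq_decide, decide_eq_decide, decide_eq_true_eq]
  omega

theorem qNegOne_cons_iff (hl : IsPartitionL (a :: t)) :
    QNegOne (a :: t) ↔
      (a :: t).length = a + 1 ∧ ∀ j, j + 1 < pPart t j → pConj t (j + 1) = pPart t j := by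
  have ha : 0 < a := hl.2 a List.mem_cons_self
  rw [qNegOne_iff hl.1, ← Nat.and_forall_add_one]
  refine and_congr ?_ (forall_congr' fun j => imp_congr_right fun hj => ?_)
  · rw [pConj_zero hl.2]
    exact ⟨fun h => h ha, fun h _ => h⟩
  · have hja : j + 1 < a := hj.trans_le (pPart_antitone hl.1 (Nat.zero_le (j + 1)))
    rw [pConj_cons_of_lt hja]
    exact Nat.add_right_cancel_iff

theorem qNegOne_pRemoveRC_cons_iff (ht : t.IsChain (· ≥ ·)) :
    QNegOne (pRemoveRC (a :: t)) ↔ ∀ j, j + 1 < pPart t j → pConj t (j + 1) = pPart t j := by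
  rw [qNegOne_iff (isChain_pRemoveRC_cons ht)]
  simp only [pPart_pRemoveRC_cons ht, pConj_pRemoveRC_cons]
  refine forall_congr' fun j => ?_
  omega

end Partitions

/-- A nonempty partition `λ` has Frobenius coordinates with `a_i = b_i - 1`
for all `i` if and only if the number of rows of `λ` is one more than the number of columns
(`ℓ(λ) = λ₁ + 1`) and the partition obtained by deleting the first row and column of `λ`
again has Frobenius coordinates with `a_i = b_i - 1` for all `i`. -/
theorem littlewood_Qneg_inductive (l : List ℕ) (hl : IsPartitionL l) (hne : l ≠ []) :
    QNegOne l ↔ (l.length = pPart l 0 + 1 ∧ QNegOne (pRemoveRC l)) := by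
  obtain ⟨a, t, rfl⟩ := List.exists_cons_of_ne_nil hne
  rw [qNegOne_cons_iff hl, qNegOne_pRemoveRC_cons_iff (t := t) hl.1.tail]
  rfl
end

section
/- Let π : X' → X be a morphism of proper varieties over C and V a coherent sheaf on X'. Suppose a group G acts compatibly on X', X, π, and V, and suppose that the G-module ⊕_{i,j} H^i(X, R^j π_* V) is semisimple and multiplicity-free. Then the Leray spectral sequence E_2^{i,j} = H^i(X, R^j π_* V) ⇒ H^{i+j}(X', V) degenerates at the second page. -/
/-!
A differential of the Leray spectral sequence changes the bidegree, so on the second page it is a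
`G`-equivariant map between two different summands of `⊕_{i,j} E₂^{i,j}`. In a semisimple
multiplicity-free module, two summands with zero intersection share no irreducible constituent,
so by Schur's lemma every equivariant map between them vanishes. Hence `d₂ = 0`, so
`E₃ ≅ E₂` bidegree by bidegree, and inductively every later page is isomorphic to `E₂` and
every later differential vanishes for the same reason.
-/

open CategoryTheory

/-- An `R`-module is multiplicity-free if any two isomorphic simple submodules coincide
(each irreducible occurs at most once). -/
def MultiplicityFree (R M : Type*) [Ring R] [AddCommGroup M] [Module R M] : Prop :=
  ∀ S T : Submodule R M, IsSimpleModule R S → IsSimpleModule R T →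
    Nonempty (S ≃ₗ[R] T) → S = T

namespace MultiplicityFree

variable {R M A B : Type*} [Ring R] [AddCommGroup M] [Module R M]
  [AddCommGroup A] [Module R A] [AddCommGroup B] [Module R B]

theorem linearMap_eq_zero_of_disjoint_range [IsSemisimpleModule R M]
    (hmf : MultiplicityFree R M) {i : A →ₗ[R] M} (hi : Function.Injective i)
    {j : B →ₗ[R] M} (hj : Function.Injective j)
    (hdisj : Disjoint (LinearMap.range i) (LinearMap.range j)) (f : A →ₗ[R] B) : f = 0 := by
  by_contra hf
  have : IsSemisimpleModule R A := .of_injective i hi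
  obtain ⟨S, hS, hSker⟩ :
      ∃ S : Submodule R A, IsSimpleModule R S ∧ ¬ S ≤ LinearMap.ker f := by
    by_contra! h
    apply hf
    rw [← LinearMap.ker_eq_top, eq_top_iff, ← IsSemisimpleModule.sSup_simples_eq_top R A]
    exact sSup_le h
  have hfS : Function.Injective (f ∘ₗ S.subtype) :=
    (LinearMap.injective_or_eq_zero _).resolve_right fun h0 =>
      hSker fun x hx => LinearMap.mem_ker.mpr (LinearMap.congr_fun h0 ⟨x, hx⟩)
  let e₁ := LinearEquiv.ofInjective (i ∘ₗ S.subtype) (hi.comp Subtype.val_injective)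
  let e₂ := LinearEquiv.ofInjective (j ∘ₗ f ∘ₗ S.subtype) (hj.comp hfS)
  have hS₁ : IsSimpleModule R (LinearMap.range (i ∘ₗ S.subtype)) := .congr e₁.symm
  have hS₂ : IsSimpleModule R (LinearMap.range (j ∘ₗ f ∘ₗ S.subtype)) := .congr e₂.symm
  have heq := hmf _ _ hS₁ hS₂ ⟨e₁.symm ≪≫ₗ e₂⟩
  have hle₁ : LinearMap.range (i ∘ₗ S.subtype) ≤ LinearMap.range i :=
    LinearMap.range_comp_le_range _ _
  have hle₂ : LinearMap.range (i ∘ₗ S.subtype) ≤ LinearMap.range j :=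
    heq ▸ LinearMap.range_comp_le_range _ _
  exact (isSimpleModule_iff_isAtom.mp hS₁).ne_bot (le_bot_iff.mp (hdisj hle₁ hle₂))

end MultiplicityFree

theorem DirectSum.disjoint_range_lof {R ι : Type*} [Semiring R] [DecidableEq ι]
    (M : ι → Type*) [∀ i, AddCommMonoid (M i)] [∀ i, Module R (M i)] {p q : ι}
    (hpq : p ≠ q) :
    Disjoint (LinearMap.range (lof R ι M p)) (LinearMap.range (lof R ι M q)) := by
  rw [disjoint_iff_inf_le]
  rintro x ⟨⟨a, rfl⟩, ⟨b, hb⟩⟩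
  have hb0 : b = 0 := by
    simpa [component.of, hpq] using congrArg (component R ι M q) hb
  simp [← hb, hb0]

theorem MultiplicityFree.directSum_linearMap_eq_zero {R ι : Type*} [Ring R] [DecidableEq ι]
    {M : ι → Type*} [∀ i, AddCommGroup (M i)] [∀ i, Module R (M i)]
    [IsSemisimpleModule R (DirectSum ι M)] (hmf : MultiplicityFree R (DirectSum ι M))
    {p q : ι} (hpq : p ≠ q) (f : M p →ₗ[R] M q) : f = 0 :=
  hmf.linearMap_eq_zero_of_disjoint_range (DirectSum.of_injective p) (DirectSum.of_injective q)
    (DirectSum.disjoint_range_lof M hpq) f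

theorem CategoryTheory.Iso.eq_zero_of_forall_eq_zero {C : Type*} [Category C]
    [Limits.HasZeroMorphisms C] {X X' Y Y' : C} (eX : X ≅ X') (eY : Y ≅ Y')
    (h : ∀ g : X' ⟶ Y', g = 0) (f : X ⟶ Y) : f = 0 := by
  simpa using congr(eX.hom ≫ $(h (eX.inv ≫ f ≫ eY.hom)) ≫ eY.inv)

/-- degeneration criterion for the Leray spectral sequence of a
`G`-equivariant morphism `π : X' → X` of proper varieties and a `G`-equivariant coherent
sheaf `V` on `X'`.  The spectral sequence is presented abstractly through its pages:
`E r p` (for `r : ℕ`) is the `(r+2)`-page in bidegree `p : ℤ × ℤ`, a `G`-representation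
(a module over the group algebra `ℂ[G]`, with morphisms of representations given by
`ℂ[G]`-linear maps, the differentials of the Leray spectral sequence being
`G`-equivariant); `d r (i, j) : E r (i, j) ⟶ E r (i + (r+2), j - (r+2) + 1)` are its
differentials, with `d ∘ d = 0`, and each page `E (r+1)` is the homology of `(E r, d r)`.
If the `G`-module `⊕_{i,j} E₂^{i,j} = ⊕_{i,j} H^i(X, R^j π_* V)` is semisimple and
multiplicity-free, then the spectral sequence degenerates at the second page:
all differentials `d r` (`r ≥ 2`) vanish. -/
theorem leray_degenerates_of_multiplicity_free (G : Type) [Group G]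
    (E : ℕ → ℤ × ℤ → ModuleCat (MonoidAlgebra ℂ G))
    (d : ∀ r : ℕ, ∀ p : ℤ × ℤ,
      E r p ⟶ E r (p.1 + ((r : ℤ) + 2), p.2 - ((r : ℤ) + 2) + 1))
    (hdd : ∀ r : ℕ, ∀ p : ℤ × ℤ,
      d r p ≫ d r (p.1 + ((r : ℤ) + 2), p.2 - ((r : ℤ) + 2) + 1) = 0)
    (hnext : ∀ r : ℕ, ∀ p : ℤ × ℤ,
      Nonempty (E (r + 1) (p.1 + ((r : ℤ) + 2), p.2 - ((r : ℤ) + 2) + 1) ≅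
        (ShortComplex.mk (d r p) (d r (p.1 + ((r : ℤ) + 2), p.2 - ((r : ℤ) + 2) + 1))
          (hdd r p)).homology))
    (hss : IsSemisimpleModule (MonoidAlgebra ℂ G) (DirectSum (ℤ × ℤ) (fun p => E 0 p)))
    (hmf : MultiplicityFree (MonoidAlgebra ℂ G) (DirectSum (ℤ × ℤ) (fun p => E 0 p))) :
    ∀ r p, d r p = 0 := by
  have hzero : ∀ p q, p ≠ q → ∀ g : E 0 p ⟶ E 0 q, g = 0 := fun p q hpq g =>
    ModuleCat.hom_ext (hmf.directSum_linearMap_eq_zero hpq g.hom)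
  have hd : ∀ r, (∀ p, Nonempty (E r p ≅ E 0 p)) → ∀ p, d r p = 0 := by
    intro r hE p
    obtain ⟨α⟩ := hE p
    obtain ⟨β⟩ := hE (p.1 + ((r : ℤ) + 2), p.2 - ((r : ℤ) + 2) + 1)
    exact α.eq_zero_of_forall_eq_zero β (hzero _ _ fun h => by simp [Prod.ext_iff] at h; omega) _
  have hE : ∀ r p, Nonempty (E r p ≅ E 0 p) := by
    intro r
    induction r with
    | zero => exact fun p => ⟨Iso.refl _⟩
    | succ r ih =>
      intro q
      obtain ⟨p, rfl⟩ :
          ∃ p : ℤ × ℤ, (p.1 + ((r : ℤ) + 2), p.2 - ((r : ℤ) + 2) + 1) = q :=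
        ⟨(q.1 - ((r : ℤ) + 2), q.2 + ((r : ℤ) + 2) - 1), by ext <;> dsimp only <;> ring⟩
      obtain ⟨γ⟩ := hnext r p
      obtain ⟨δ⟩ := ih (p.1 + ((r : ℤ) + 2), p.2 - ((r : ℤ) + 2) + 1)
      exact ⟨γ ≪≫
        (ShortComplex.LeftHomologyData.ofZeros _ (hd r ih p) (hd r ih _)).homologyIso ≪≫ δ⟩
  exact fun r => hd r (hE r)
end

section
/- Let W be the Coxeter group of type BC_∞ acting on the set U of eventually-zero integer sequences, generated by s_0 (negating the first entry) and the adjacent transpositions s_i (i ≥ 1), and let the dot action be w • λ = w(λ + ρ) − ρ with ρ = (−(n+1), −(n+2), …). Then for every partition λ (as an element of U, via its transpose λ†), exactly one of the following holds: (i) there is a unique w ∈ W such that w • λ† is the transpose of a partition with at most n parts, or (ii) there is a non-identity element w ∈ W with w • λ† = λ†. -/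
/-- The generator `s₀` of the type `BC_∞` Weyl group: the automorphism of the set of integer
sequences negating the first entry. -/
def bcS0 : Equiv.Perm (ℕ → ℤ) :=
  Function.Involutive.toPerm (fun f => Function.update f 0 (-(f 0))) (by
    intro f
    funext x
    by_cases hx : x = 0 <;> simp [hx])

/-- The generator `sᵢ` (`i ≥ 1`): the automorphism swapping the entries in (0-indexed)
positions `i` and `i+1`; `bcSwap i` is `s_{i+1}` in the 1-indexed convention. -/
def bcSwap (i : ℕ) : Equiv.Perm (ℕ → ℤ) :=
  (Equiv.swap i (i + 1)).arrowCongr (Equiv.refl ℤ)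

/-- The Coxeter group `W` of type `BC_∞`: the group of automorphisms of the set of integer
sequences generated by `s₀` and the adjacent transpositions `sᵢ`, `i ≥ 1`. -/
def bcW : Subgroup (Equiv.Perm (ℕ → ℤ)) :=
  Subgroup.closure ({bcS0} ∪ Set.range bcSwap)

/-- `ρ = (-(n+1), -(n+2), …)`. -/
def bcRho (n : ℕ) (k : ℕ) : ℤ := -((n : ℤ) + 1 + k)

/-- The dot action `w • λ = w(λ + ρ) - ρ` of `W` on integer sequences. -/
def bcDot (n : ℕ) (w : Equiv.Perm (ℕ → ℤ)) (f : ℕ → ℤ) : ℕ → ℤ :=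
  fun k => w (fun j => f j + bcRho n j) k - bcRho n k

/-- The sequence `λ†` of column lengths of a partition `λ`. -/
def pConjSeq (l : List ℕ) : ℕ → ℤ := fun i => (pConj l i : ℤ)

/-- `g` is the transpose of a partition with at most `n` parts: `g` is weakly decreasing,
takes values in `[0, n]`, and is eventually zero. -/
def IsAdmissibleConj (n : ℕ) (g : ℕ → ℤ) : Prop :=
  (∀ i, 0 ≤ g i) ∧ (∀ i, g (i + 1) ≤ g i) ∧ (∀ i, g i ≤ n) ∧ ∃ N, ∀ k ≥ N, g k = 0

def IsSignedPerm (w : Equiv.Perm (ℕ → ℤ)) : Prop :=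
  ∃ (σ : Equiv.Perm ℕ) (ε : ℕ → ℤˣ), ∀ f k, w f k = ε k * f (σ k)

def signedPerms : Subgroup (Equiv.Perm (ℕ → ℤ)) where
  carrier := {w | IsSignedPerm w}
  one_mem' := ⟨1, 1, fun _ _ => by simp⟩
  mul_mem' := by
    rintro a b ⟨σ, ε, ha⟩ ⟨τ, δ, hb⟩
    refine ⟨σ.trans τ, fun k => ε k * δ (σ k), fun f k => ?_⟩
    change a (b f) k = _
    rw [ha, hb, Equiv.trans_apply, Units.val_mul, mul_assoc]
  inv_mem' := by
    rintro a ⟨σ, ε, ha⟩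
    refine ⟨σ.symm, fun k => (ε (σ.symm k))⁻¹, fun f k => ?_⟩
    suffices a⁻¹ f = fun j => ((ε (σ.symm j))⁻¹ : ℤˣ) * f (σ.symm j) from congrFun this k
    refine Equiv.Perm.inv_eq_iff_eq.2 (funext fun m => ?_)
    rw [ha, Equiv.symm_apply_apply, ← mul_assoc, ← Units.val_mul, mul_inv_cancel, Units.val_one,
      one_mul]

theorem isSignedPerm_of_mem_bcW {w : Equiv.Perm (ℕ → ℤ)} (hw : w ∈ bcW) : IsSignedPerm w := by
  refine (Subgroup.closure_le signedPerms).2 ?_ hw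
  rintro x (rfl | ⟨i, rfl⟩)
  · refine ⟨1, fun k => if k = 0 then -1 else 1, fun f k => ?_⟩
    by_cases hk : k = 0 <;> simp [bcS0, Function.Involutive.toPerm, hk, Function.update]
  · exact ⟨Equiv.swap i (i + 1), 1, fun f k => by simp [bcSwap, Equiv.arrowCongr]⟩

/-- `f` has trivial stabilizer among signed permutations. -/
def IsBCRegular (f : ℕ → ℤ) : Prop := (∀ i, f i ≠ 0) ∧ Function.Injective fun i => |f i|

theorem Int.abs_units (u : ℤˣ) : |(u : ℤ)| = 1 := by
  rw [Int.abs_eq_natAbs, Int.units_natAbs, Nat.cast_one]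

namespace IsSignedPerm

variable {w w₁ w₂ : Equiv.Perm (ℕ → ℤ)}

theorem range_abs_apply (hw : IsSignedPerm w) (f : ℕ → ℤ) :
    Set.range (fun k => |w f k|) = Set.range (fun k => |f k|) := by
  obtain ⟨σ, ε, h⟩ := hw
  have : (fun k => |w f k|) = (fun k => |f k|) ∘ σ := by
    funext k
    rw [h, abs_mul, Int.abs_units, one_mul, Function.comp_apply]
  rw [this, Set.range_comp, σ.range_eq_univ, Set.image_univ]

theorem eq_of_apply_eq (hw₁ : IsSignedPerm w₁) (hw₂ : IsSignedPerm w₂) {f : ℕ → ℤ}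
    (hf : IsBCRegular f) (h : w₁ f = w₂ f) : w₁ = w₂ := by
  obtain ⟨σ₁, ε₁, h₁⟩ := hw₁
  obtain ⟨σ₂, ε₂, h₂⟩ := hw₂
  have hk : ∀ k, (ε₁ k : ℤ) * f (σ₁ k) = ε₂ k * f (σ₂ k) := fun k => by
    rw [← h₁, ← h₂, h]
  have hσ : ∀ k, σ₁ k = σ₂ k := fun k => hf.2 <| show |f (σ₁ k)| = |f (σ₂ k)| by
    simpa only [abs_mul, Int.abs_units, one_mul] using congrArg abs (hk k)
  have hε : ∀ k, (ε₁ k : ℤ) = ε₂ k := fun k =>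
    mul_right_cancel₀ (hf.1 (σ₂ k)) (hσ k ▸ hk k)
  ext g k
  rw [h₁, h₂, hσ, hε]

end IsSignedPerm

def flipAt (i : ℕ) : Equiv.Perm (ℕ → ℤ) :=
  Function.Involutive.toPerm (fun f => Function.update f i (-(f i))) fun f => by
    funext x
    by_cases hx : x = i <;> simp [hx]

theorem flipAt_apply (i : ℕ) (f : ℕ → ℤ) (k : ℕ) :
    flipAt i f k = if k = i then -f i else f k := by
  by_cases hk : k = i <;> simp [flipAt, Function.Involutive.toPerm, hk, Function.update]

def permHom : Equiv.Perm ℕ →* Equiv.Perm (ℕ → ℤ) where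
  toFun σ := σ.arrowCongr (Equiv.refl ℤ)
  map_one' := rfl
  map_mul' _ _ := rfl

theorem permHom_apply (σ : Equiv.Perm ℕ) (f : ℕ → ℤ) (k : ℕ) : permHom σ f k = f (σ.symm k) :=
  rfl

theorem permHom_inv_apply (σ : Equiv.Perm ℕ) (f : ℕ → ℤ) : permHom σ⁻¹ f = f ∘ σ :=
  rfl

theorem permHom_swap_succ_mem (i : ℕ) : permHom (Equiv.swap i (i + 1)) ∈ bcW :=
  Subgroup.subset_closure (Or.inr ⟨i, rfl⟩)

theorem permHom_swap_mem (i j : ℕ) : permHom (Equiv.swap i j) ∈ bcW := by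
  wlog hij : i < j generalizing i j
  · rcases (not_lt.1 hij).eq_or_lt with rfl | hji
    · rw [Equiv.swap_self, ← Equiv.Perm.one_def, map_one]
      exact one_mem _
    · exact Equiv.swap_comm i j ▸ this j i hji
  induction j, hij using Nat.le_induction with
  | base => exact permHom_swap_succ_mem i
  | succ j hij ih =>
    rw [← Equiv.swap_comm, ← Equiv.swap_mul_swap_mul_swap (by omega : i ≠ j) (by omega : i ≠ j + 1),
      map_mul, map_mul]
    exact mul_mem (mul_mem (permHom_swap_succ_mem j) ih) (permHom_swap_succ_mem j)

theorem flipAt_mem (i : ℕ) : flipAt i ∈ bcW := by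
  induction i with
  | zero => exact Subgroup.subset_closure (Or.inl rfl)
  | succ i ih =>
    have hconj : flipAt (i + 1) =
        permHom (Equiv.swap i (i + 1)) * flipAt i * permHom (Equiv.swap i (i + 1)) := by
      ext f k
      change _ = permHom _ (flipAt i (permHom _ f)) k
      simp only [permHom_apply, flipAt_apply, Equiv.symm_swap, Equiv.swap_apply_def]
      split_ifs <;> first | rfl | (congr 1 <;> omega)
    rw [hconj]
    exact mul_mem (mul_mem (permHom_swap_succ_mem i) ih) (permHom_swap_succ_mem i)

theorem exists_ne_one_apply_eq_of_not_isBCRegular {f : ℕ → ℤ} (hf : Function.Injective f)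
    (h : ¬IsBCRegular f) : ∃ w ∈ bcW, w ≠ 1 ∧ w f = f := by
  by_cases hzero : ∃ i, f i = 0
  · obtain ⟨i, hi⟩ := hzero
    refine ⟨flipAt i, flipAt_mem i, fun h1 => ?_, funext fun k => ?_⟩
    · have := congrFun (DFunLike.congr_fun h1 fun _ => 1) i
      simp [flipAt_apply] at this
    · rw [flipAt_apply]
      split_ifs with hk <;> simp [hk, hi]
  · obtain ⟨i, j, habs, hij⟩ : ∃ i j, |f i| = |f j| ∧ i ≠ j := by
      push Not at hzero
      simpa [IsBCRegular, Function.Injective, hzero] using h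
    have hneg : f i = -f j := (abs_eq_abs.1 habs).resolve_left (hf.ne hij)
    refine ⟨flipAt i * flipAt j * permHom (Equiv.swap i j),
      mul_mem (mul_mem (flipAt_mem i) (flipAt_mem j)) (permHom_swap_mem i j), fun h1 => ?_, ?_⟩
    · have := congrFun (DFunLike.congr_fun h1 (Pi.single j 1)) i
      change flipAt i (flipAt j (permHom _ _)) i = _ at this
      simp [flipAt_apply, permHom_apply, hij, Pi.single_apply] at this
    · ext k
      change flipAt i (flipAt j (permHom _ f)) k = f k
      simp only [flipAt_apply, permHom_apply, Equiv.symm_swap, if_neg hij,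
        Equiv.swap_apply_left, Equiv.swap_apply_right]
      rcases eq_or_ne k i with rfl | hki
      · rw [if_pos rfl, hneg]
      rcases eq_or_ne k j with rfl | hkj
      · rw [if_neg hki, if_pos rfl, hneg, neg_neg]
      · rw [if_neg hki, if_neg hkj, Equiv.swap_apply_of_ne_of_ne hki hkj]

theorem exists_mem_bcW_apply_eq_neg_abs (N : ℕ) {f : ℕ → ℤ} (hf : ∀ k ≥ N, f k ≤ 0) :
    ∃ w ∈ bcW, w f = fun k => -|f k| := by
  induction N generalizing f with
  | zero =>
    exact ⟨1, one_mem _, funext fun k => by rw [abs_of_nonpos (hf k k.zero_le), neg_neg]; rfl⟩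
  | succ N ih =>
    obtain ⟨u, hu, hu_abs, hu_nonpos⟩ :
        ∃ u ∈ bcW, (∀ k, |u f k| = |f k|) ∧ ∀ k ≥ N, u f k ≤ 0 := by
      by_cases hpos : 0 < f N
      · refine ⟨flipAt N, flipAt_mem N, fun k => ?_, fun k hk => ?_⟩ <;> rw [flipAt_apply] <;>
          split_ifs with hkN
        · rw [hkN, abs_neg]
        · rfl
        · omega
        · exact hf k (by omega)
      · exact ⟨1, one_mem _, fun k => rfl, fun k hk =>
          hk.eq_or_lt.elim (fun h => h ▸ not_lt.1 hpos) fun h => hf k h⟩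
    obtain ⟨w, hw, hwu⟩ := ih hu_nonpos
    exact ⟨w * u, mul_mem hw hu, by simp only [Equiv.Perm.mul_apply, hwu, hu_abs]⟩

theorem exists_permHom_mem_bcW_strictAnti (N : ℕ) {f : ℕ → ℤ} (hf : Function.Injective f)
    (htail : ∀ k ≥ N, f (k + 1) < f k) (hhead : ∀ k < N, f N < f k) :
    ∃ σ : Equiv.Perm ℕ, permHom σ⁻¹ ∈ bcW ∧ StrictAnti (f ∘ σ) ∧ ∀ k ≥ N, σ k = k := by
  induction N generalizing f with
  | zero => exact ⟨1, by simp only [inv_one, map_one, one_mem], strictAnti_nat_of_succ_lt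
      fun k => htail k k.zero_le, fun _ _ => rfl⟩
  | succ N ih =>
    -- move a minimum of `f` on `[0, N]` to position `N`
    obtain ⟨m, hm, hmin⟩ := (Finset.range (N + 1)).exists_min_image f ⟨0, by simp⟩
    rw [Finset.mem_range] at hm
    set τ := Equiv.swap m N
    have hτ : ∀ k ≤ N, τ k ≤ N := fun k hk => by
      simp only [τ, Equiv.swap_apply_def]; split_ifs <;> omega
    obtain ⟨σ, hσ, hanti, hfix⟩ := ih (f := f ∘ τ) (hf.comp τ.injective)
      (fun k hk => by
        rcases hk.eq_or_lt with rfl | hk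
        · simpa [τ, Equiv.swap_apply_of_ne_of_ne (by omega : N + 1 ≠ m) (by omega : N + 1 ≠ N)]
            using hhead m hm
        · simpa [τ, Equiv.swap_apply_of_ne_of_ne (by omega : k ≠ m) (by omega : k ≠ N),
            Equiv.swap_apply_of_ne_of_ne (by omega : k + 1 ≠ m) (by omega : k + 1 ≠ N)]
            using htail k hk)
      (fun k hk => by
        have hne : τ k ≠ m := fun h => by
          rw [← Equiv.swap_apply_right m N] at h; exact absurd (τ.injective h) (by omega)
        simpa [τ] using (hmin (τ k) (Finset.mem_range.2 (Nat.lt_succ_of_le (hτ k hk.le)))).lt_of_ne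
          (fun h => hne (hf h).symm))
    refine ⟨τ * σ, ?_, hanti, fun k hk => ?_⟩
    · rw [mul_inv_rev, map_mul, Equiv.swap_inv]
      exact mul_mem hσ (permHom_swap_mem m N)
    · rw [Equiv.Perm.mul_apply, hfix k (by omega)]
      exact Equiv.swap_apply_of_ne_of_ne (by omega) (by omega)

/-- Strictly decreasing with negative entries: where `w (λ + ρ)` has to land for `w • λ` to be
admissible. -/
def IsAntidominant (g : ℕ → ℤ) : Prop := StrictAnti g ∧ ∀ k, g k < 0

theorem exists_mem_bcW_isAntidominant {f : ℕ → ℤ} (hf : IsBCRegular f) (N : ℕ)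
    (htail : ∀ k ≥ N, f (k + 1) < f k ∧ f k < 0) (hhead : ∀ k < N, |f k| < |f N|) :
    ∃ w ∈ bcW, IsAntidominant (w f) ∧ ∀ k ≥ N, w f k = f k := by
  obtain ⟨u, hu, hfu⟩ := exists_mem_bcW_apply_eq_neg_abs N fun k hk => (htail k hk).2.le
  set g : ℕ → ℤ := fun k => -|f k|
  have hg_tail : ∀ k ≥ N, g k = f k := fun k hk => by
    simp only [g, abs_of_neg (htail k hk).2, neg_neg]
  obtain ⟨σ, hσ, hanti, hfix⟩ := exists_permHom_mem_bcW_strictAnti N (f := g)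
    (fun a b h => hf.2 (neg_injective h))
    (fun k hk => by rw [hg_tail k hk, hg_tail (k + 1) (by omega)]; exact (htail k hk).1)
    (fun k hk => neg_lt_neg (hhead k hk))
  have hw : (permHom σ⁻¹ * u) f = g ∘ σ := by
    rw [Equiv.Perm.mul_apply, hfu, permHom_inv_apply]
  refine ⟨permHom σ⁻¹ * u, mul_mem hσ hu, ⟨?_, fun k => ?_⟩, fun k hk => ?_⟩ <;> rw [hw]
  · exact hanti
  · exact neg_neg_of_pos (abs_pos.2 (hf.1 _))
  · rw [Function.comp_apply, hfix k hk, hg_tail k hk]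

theorem IsSignedPerm.eq_of_isAntidominant {w₁ w₂ : Equiv.Perm (ℕ → ℤ)} (hw₁ : IsSignedPerm w₁)
    (hw₂ : IsSignedPerm w₂) {f : ℕ → ℤ} (hf : IsBCRegular f) (h₁ : IsAntidominant (w₁ f))
    (h₂ : IsAntidominant (w₂ f)) : w₁ = w₂ := by
  have habs_mono : ∀ {g : ℕ → ℤ}, IsAntidominant g → StrictMono fun k => |g k| :=
    fun hg a b hab => by
      simpa only [abs_of_neg (hg.2 _)] using neg_lt_neg (hg.1 hab)
  have habs : (fun k => |w₁ f k|) = fun k => |w₂ f k| :=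
    ((habs_mono h₁).range_inj (habs_mono h₂)).1 <| by
      rw [hw₁.range_abs_apply, hw₂.range_abs_apply]
  refine hw₁.eq_of_apply_eq hw₂ hf (funext fun k => ?_)
  simpa only [abs_of_neg (h₁.2 k), abs_of_neg (h₂.2 k), neg_inj] using congrFun habs k

theorem isAdmissibleConj_sub_bcRho_iff {n : ℕ} {g : ℕ → ℤ} :
    IsAdmissibleConj n (g - bcRho n) ↔ IsAntidominant g ∧ ∃ N, ∀ k ≥ N, g k = bcRho n k := by
  simp only [IsAdmissibleConj, IsAntidominant, Pi.sub_apply, bcRho]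
  constructor
  · rintro ⟨-, hdec, hle, N, hN⟩
    refine ⟨⟨strictAnti_nat_of_succ_lt fun k => ?_, fun k => ?_⟩, N, fun k hk => ?_⟩
    · have := hdec k; push_cast at this; omega
    · have := hle k; omega
    · have := hN k hk; omega
  · rintro ⟨⟨hanti, hneg⟩, N, hN⟩
    -- `g k + k` is antitone and equals `-(n + 1)` from `N` on
    have hshift : Antitone fun k => g k + k := antitone_nat_of_succ_le fun k => by
      have := hanti (Nat.lt_add_one k); push_cast; omega
    refine ⟨fun k => ?_, fun k => ?_, fun k => ?_, N, fun k hk => ?_⟩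
    · have h1 := hshift (le_max_left k N)
      have h2 := hN _ (le_max_right k N)
      simp only at h1; omega
    · have := hanti (Nat.lt_add_one k); push_cast; omega
    · have h1 := hshift (Nat.zero_le k)
      have h2 := hneg 0
      simp only [Nat.cast_zero] at h1; omega
    · have := hN k hk; omega

theorem bcDot_eq (n : ℕ) (w : Equiv.Perm (ℕ → ℤ)) (f : ℕ → ℤ) :
    bcDot n w f = w (f + bcRho n) - bcRho n :=
  rfl

theorem bcDot_mul (n : ℕ) (w w' : Equiv.Perm (ℕ → ℤ)) (f : ℕ → ℤ) :
    bcDot n (w * w') f = bcDot n w (bcDot n w' f) := by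
  rw [bcDot_eq, bcDot_eq n w, bcDot_eq, sub_add_cancel]
  rfl

theorem not_existsUnique_of_bcDot_eq_self {n : ℕ} {f : ℕ → ℤ} {P : (ℕ → ℤ) → Prop}
    {w₀ : Equiv.Perm (ℕ → ℤ)} (hw₀ : w₀ ∈ bcW) (hne : w₀ ≠ 1) (hfix : bcDot n w₀ f = f) :
    ¬∃! w, w ∈ bcW ∧ P (bcDot n w f) := by
  rintro ⟨w, ⟨hw, hP⟩, huniq⟩
  have : w * w₀ = w * 1 := by
    rw [mul_one]
    exact huniq _ ⟨mul_mem hw hw₀, by rwa [bcDot_mul, hfix]⟩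
  exact hne (mul_left_cancel this)

theorem pConj_succ_le (l : List ℕ) (i : ℕ) : pConj l (i + 1) ≤ pConj l i :=
  (List.monotone_filter_right _ fun a ha => by
    simp only [decide_eq_true_eq] at ha ⊢; omega).length_le

theorem pConj_le_length (l : List ℕ) (i : ℕ) : pConj l i ≤ l.length :=
  List.length_filter_le _ _

theorem pConj_eq_zero_of_sum_le {l : List ℕ} {i : ℕ} (hi : l.sum ≤ i) : pConj l i = 0 := by
  rw [pConj, List.length_eq_zero_iff, List.filter_eq_nil_iff]
  intro a ha
  have := List.le_sum_of_mem ha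
  simp only [decide_eq_true_eq, not_lt]
  omega

section

variable (n : ℕ) (l : List ℕ)

theorem pConjSeq_add_bcRho_apply (k : ℕ) :
    (pConjSeq l + bcRho n) k = pConj l k - ((n : ℤ) + 1 + k) :=
  (sub_eq_add_neg _ _).symm

theorem strictAnti_pConjSeq_add_bcRho : StrictAnti (pConjSeq l + bcRho n) :=
  strictAnti_nat_of_succ_lt fun k => by
    have := pConj_succ_le l k
    rw [pConjSeq_add_bcRho_apply, pConjSeq_add_bcRho_apply]; push_cast; omega

theorem pConjSeq_add_bcRho_of_sum_le {k : ℕ} (hk : l.sum ≤ k) :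
    (pConjSeq l + bcRho n) k = bcRho n k := by
  rw [pConjSeq_add_bcRho_apply, pConj_eq_zero_of_sum_le hk, bcRho]; push_cast; ring

theorem abs_pConjSeq_add_bcRho_lt {k N : ℕ} (hk : k < N) (hN : l.length ≤ N) :
    |(pConjSeq l + bcRho n) k| < |bcRho n N| := by
  have := pConj_le_length l k
  rw [bcRho, abs_neg, abs_of_nonneg (by positivity : (0 : ℤ) ≤ n + 1 + N), abs_lt,
    pConjSeq_add_bcRho_apply]
  constructor <;> omega

end

theorem bc_dot_dichotomy_general (n : ℕ) (l : List ℕ) :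
    Xor'
      (∃! w, w ∈ bcW ∧ IsAdmissibleConj n (bcDot n w (pConjSeq l)))
      (∃ w ∈ bcW, w ≠ 1 ∧ bcDot n w (pConjSeq l) = pConjSeq l) := by
  set μ : ℕ → ℤ := pConjSeq l + bcRho n
  have hdot : ∀ w, bcDot n w (pConjSeq l) = w μ - bcRho n := fun _ => rfl
  have hμ_anti : StrictAnti μ := strictAnti_pConjSeq_add_bcRho n l
  obtain ⟨N, hN⟩ : ∃ N, N = l.sum + l.length := ⟨_, rfl⟩
  have hμ_tail : ∀ k ≥ N, μ k = bcRho n k := fun k hk =>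
    pConjSeq_add_bcRho_of_sum_le n l (by omega)
  by_cases hreg : IsBCRegular μ
  · obtain ⟨w, hw, hanti, hfix⟩ := exists_mem_bcW_isAntidominant hreg N
      (fun k hk => ⟨hμ_anti (Nat.lt_add_one k), by rw [hμ_tail k hk, bcRho]; omega⟩)
      (fun k hk => hμ_tail N le_rfl ▸ abs_pConjSeq_add_bcRho_lt n l hk (by omega))
    refine Or.inl ⟨⟨w, ⟨hw, ?_⟩, fun w' ⟨hw', hadm'⟩ => ?_⟩, ?_⟩
    · rw [hdot, isAdmissibleConj_sub_bcRho_iff]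
      exact ⟨hanti, N, fun k hk => (hfix k hk).trans (hμ_tail k hk)⟩
    · rw [hdot, isAdmissibleConj_sub_bcRho_iff] at hadm'
      exact (isSignedPerm_of_mem_bcW hw').eq_of_isAntidominant (isSignedPerm_of_mem_bcW hw) hreg
        hadm'.1 hanti
    · rintro ⟨w', hw', hne, hfix'⟩
      exact hne <| (isSignedPerm_of_mem_bcW hw').eq_of_apply_eq
        (isSignedPerm_of_mem_bcW (one_mem _)) hreg (sub_eq_iff_eq_add.1 (hdot w' ▸ hfix'))
  · obtain ⟨w, hw, hne, hfix⟩ := exists_ne_one_apply_eq_of_not_isBCRegular hμ_anti.injective hreg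
    have hdot_fix : bcDot n w (pConjSeq l) = pConjSeq l := by rw [hdot, hfix, add_sub_cancel_right]
    exact Or.inr ⟨⟨w, hw, hne, hdot_fix⟩, not_existsUnique_of_bcDot_eq_self hw hne hdot_fix⟩

/-- For the dot action of the type `BC_∞` Weyl group `W` (with
`ρ = (-(n+1), -(n+2), …)`, so that `s₀ • (a₁, a₂, …) = (2n + 2 - a₁, a₂, …)` and
`sᵢ • (…, aᵢ, a_{i+1}, …) = (…, a_{i+1} - 1, aᵢ + 1, …)`) and for every partition `λ`
(identified with its transpose `λ†`), exactly one of the following holds: either there is a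
unique `w ∈ W` such that `w • λ†` is the transpose of a partition with at most `n` parts, or
some non-identity element `w ∈ W` fixes `λ†` under the dot action. -/
theorem bc_dot_dichotomy (n : ℕ) (l : List ℕ) (hl : IsPartitionL l) :
    Xor'
      (∃! w, w ∈ bcW ∧ IsAdmissibleConj n (bcDot n w (pConjSeq l)))
      (∃ w ∈ bcW, w ≠ 1 ∧ bcDot n w (pConjSeq l) = pConjSeq l) :=
  bc_dot_dichotomy_general n l
end

section
/- Let n ≥ 0 and let λ be a partition with ℓ(λ) > n. Define the symplectic modification rule: remove from λ the border strip R_λ of size 2(ℓ(λ) − n − 1) starting at the first box of the final row, if it exists and yields a partition. Then removing R_λ is equivalent to the following hook operation: there is a box b in the first column of λ whose hook length equals 2(ℓ(λ) − n − 1), and λ \ R_λ equals the partition obtained by removing the hook of b and shifting all boxes below this hook one step in the northwest direction; moreover, the border strips R of λ starting at the last box of the first column with λ \ R a partition are in bijection with the boxes of the first column of λ, the strip corresponding to box b having the same size as the hook of b. -/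
/-- Two boxes of a Young diagram are adjacent if they share an edge. -/
def BoxAdj (a b : ℕ × ℕ) : Prop :=
  (a.1 = b.1 ∧ (a.2 = b.2 + 1 ∨ b.2 = a.2 + 1)) ∨
  (a.2 = b.2 ∧ (a.1 = b.1 + 1 ∨ b.1 = a.1 + 1))

/-- A finite set of boxes is a border strip if it is edge-connected and contains no
`2 × 2` square. (It is applied below to skew diagrams `λ \ μ`.) -/
def IsBorderStrip (R : Finset (ℕ × ℕ)) : Prop :=
  (∀ a ∈ R, ∀ b ∈ R, Relation.ReflTransGen (fun x y => x ∈ R ∧ y ∈ R ∧ BoxAdj x y) a b) ∧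
  ¬∃ i j, (i, j) ∈ R ∧ (i + 1, j) ∈ R ∧ (i, j + 1) ∈ R ∧ (i + 1, j + 1) ∈ R

/-- The hook length of the box `(i, j)` of `μ`: the number of boxes directly to the right of
or directly below `(i, j)`, including the box itself. -/
def hookLen (μ : YoungDiagram) (i j : ℕ) : ℕ :=
  (μ.rowLen i - j) + (μ.colLen j - i) - 1

/-- The topmost row met by a set of boxes. -/
noncomputable def topRow (R : Finset (ℕ × ℕ)) : ℕ := sInf {i | ∃ j, (i, j) ∈ R}

/-!
Let `S = λ \ ν` be a border strip containing the last box `(ℓ - 1, 0)` of the first column, and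
let `r` be its top row. Rows above `r` are untouched. For `r ≤ i < ℓ - 1`, a path in `S` from row
`r` down to row `ℓ - 1` crosses from row `i` to row `i + 1`, which gives `ν_i < λ_{i+1}`, while the
absence of `2 × 2` squares gives `λ_{i+1} ≤ ν_i + 1`. Hence `ν_i = λ_{i+1} - 1` for `i ≥ r`: `ν` is
`λ` with the hook of `(r, 0)` removed and the boxes below it shifted northwest. Conversely, this
diagram does cut out such a border strip for every first-column box `(r, 0)`, and its size
`∑_{i ≥ r} (λ_i - ν_i)` telescopes to the hook length `λ_r + ℓ - 1 - r`.
-/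

open Finset

theorem BoxAdj.symm {a b : ℕ × ℕ} (h : BoxAdj a b) : BoxAdj b a := by
  unfold BoxAdj at *
  omega

theorem exists_vertical_step_of_reflTransGen {R : Finset (ℕ × ℕ)} {a b : ℕ × ℕ}
    (h : Relation.ReflTransGen (fun x y => x ∈ R ∧ y ∈ R ∧ BoxAdj x y) a b) {i : ℕ}
    (ha : a.1 ≤ i) (hb : i < b.1) : ∃ j, (i, j) ∈ R ∧ (i + 1, j) ∈ R := by
  induction h with
  | refl => omega
  | @tail c d _ hcd ih =>
    by_cases hc : i < c.1
    · exact ih hc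
    · obtain ⟨hcR, hdR, hadj⟩ := hcd
      obtain ⟨c1, c2⟩ := c
      obtain ⟨d1, d2⟩ := d
      obtain ⟨rfl, rfl, rfl⟩ : c1 = i ∧ d1 = i + 1 ∧ c2 = d2 := by
        unfold BoxAdj at hadj
        dsimp only at *
        omega
      exact ⟨c2, hcR, hdR⟩

theorem topRow_le {R : Finset (ℕ × ℕ)} {i j : ℕ} (h : (i, j) ∈ R) : topRow R ≤ i :=
  Nat.sInf_le ⟨j, h⟩

theorem exists_topRow_mem {R : Finset (ℕ × ℕ)} {a : ℕ × ℕ} (ha : a ∈ R) :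
    ∃ j, (topRow R, j) ∈ R :=
  Nat.sInf_mem (s := {i | ∃ j, (i, j) ∈ R}) ⟨a.1, a.2, ha⟩

namespace YoungDiagram

theorem ext_rowLen {μ ν : YoungDiagram} (h : ∀ i, μ.rowLen i = ν.rowLen i) : μ = ν := by
  ext ⟨i, j⟩
  simp only [mem_cells, mem_iff_lt_rowLen, h]

theorem rowLen_eq_of_forall_mem_iff {μ : YoungDiagram} {i m : ℕ}
    (h : ∀ j, (i, j) ∈ μ ↔ j < m) : μ.rowLen i = m := by
  have h₁ := h (μ.rowLen i)
  have h₂ := h m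
  simp only [mem_iff_lt_rowLen] at h₁ h₂
  omega

theorem rowLen_le_rowLen {μ ν : YoungDiagram} (h : ν ≤ μ) (i : ℕ) :
    ν.rowLen i ≤ μ.rowLen i := by
  by_contra! hlt
  exact lt_irrefl _ (mem_iff_lt_rowLen.1 (h (mem_iff_lt_rowLen.2 hlt)))

theorem rowLen_pos_iff (μ : YoungDiagram) (i : ℕ) : 0 < μ.rowLen i ↔ i < μ.colLen 0 :=
  mem_iff_lt_rowLen.symm.trans mem_iff_lt_colLen

theorem lt_colLen_zero_of_mem {μ : YoungDiagram} {i j : ℕ} (h : (i, j) ∈ μ) :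
    i < μ.colLen 0 :=
  mem_iff_lt_colLen.1 (μ.up_left_mem le_rfl (Nat.zero_le j) h)

theorem mk_mem_cells_sdiff {μ ν : YoungDiagram} {i j : ℕ} :
    (i, j) ∈ μ.cells \ ν.cells ↔ ν.rowLen i ≤ j ∧ j < μ.rowLen i := by
  simp only [mem_sdiff, mem_cells, mem_iff_lt_rowLen, not_lt]
  tauto

theorem card_cells_sdiff (μ ν : YoungDiagram) :
    #(μ.cells \ ν.cells) = ∑ i ∈ range (μ.colLen 0), (μ.rowLen i - ν.rowLen i) := by
  rw [card_eq_sum_card_fiberwise (f := Prod.fst) (t := range (μ.colLen 0))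
    fun c hc => mem_range.2 (lt_colLen_zero_of_mem (mem_sdiff.1 hc).1)]
  refine sum_congr rfl fun i _ => ?_
  have hrow : {c ∈ μ.cells \ ν.cells | c.1 = i} = {i} ×ˢ Ico (ν.rowLen i) (μ.rowLen i) := by
    ext ⟨a, b⟩
    simp only [mem_filter, mk_mem_cells_sdiff, mem_product, mem_singleton, mem_Ico]
    grind
  rw [hrow, card_product, card_singleton, Nat.card_Ico, one_mul]

/-- The hook of `(r, 0)` removed from `μ`, and the boxes below it shifted one step northwest. -/
def hookRemoval (μ : YoungDiagram) (r : ℕ) : YoungDiagram where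
  cells := {c ∈ μ.cells | c.1 < r ∨ c.2 + 1 < μ.rowLen (c.1 + 1)}
  isLowerSet := by
    rintro ⟨a1, a2⟩ ⟨b1, b2⟩ ⟨h1, h2⟩ ha
    dsimp only at h1 h2
    simp only [coe_filter, Set.mem_ofPred_eq, mem_cells] at ha ⊢
    have := μ.rowLen_anti (b1 + 1) (a1 + 1) (by omega)
    exact ⟨μ.up_left_mem h1 h2 ha.1, by omega⟩

variable {μ : YoungDiagram} {r : ℕ}

theorem mem_hookRemoval {i j : ℕ} :
    (i, j) ∈ μ.hookRemoval r ↔ (i, j) ∈ μ ∧ (i < r ∨ j + 1 < μ.rowLen (i + 1)) :=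
  mem_filter

theorem hookRemoval_le (μ : YoungDiagram) (r : ℕ) : μ.hookRemoval r ≤ μ :=
  fun _ hc => (mem_filter.1 hc).1

theorem rowLen_hookRemoval (μ : YoungDiagram) (r i : ℕ) :
    (μ.hookRemoval r).rowLen i = if i < r then μ.rowLen i else μ.rowLen (i + 1) - 1 := by
  refine rowLen_eq_of_forall_mem_iff fun j => ?_
  have := μ.rowLen_anti i (i + 1) (Nat.le_succ i)
  rw [mem_hookRemoval, mem_iff_lt_rowLen]
  split_ifs <;> omega

theorem mk_mem_cells_sdiff_hookRemoval {i j : ℕ} :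
    (i, j) ∈ μ.cells \ (μ.hookRemoval r).cells ↔
      r ≤ i ∧ μ.rowLen (i + 1) ≤ j + 1 ∧ j < μ.rowLen i := by
  rw [mk_mem_cells_sdiff, rowLen_hookRemoval]
  split_ifs <;> omega

theorem corner_mem_cells_sdiff_hookRemoval (hr : (r, 0) ∈ μ) :
    (μ.colLen 0 - 1, 0) ∈ μ.cells \ (μ.hookRemoval r).cells := by
  have hrℓ := mem_iff_lt_colLen.1 hr
  have hlast := (μ.rowLen_pos_iff (μ.colLen 0 - 1)).2 (by omega)
  have hbelow := (μ.rowLen_pos_iff (μ.colLen 0 - 1 + 1)).not.2 (by omega)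
  rw [mk_mem_cells_sdiff_hookRemoval]
  omega

theorem topRow_cells_sdiff_hookRemoval (hr : (r, 0) ∈ μ) :
    topRow (μ.cells \ (μ.hookRemoval r).cells) = r := by
  refine le_antisymm (topRow_le (j := μ.rowLen r - 1) ?_) ?_
  · have := mem_iff_lt_rowLen.1 hr
    have := μ.rowLen_anti r (r + 1) (Nat.le_succ r)
    rw [mk_mem_cells_sdiff_hookRemoval]
    omega
  · obtain ⟨j, hj⟩ := exists_topRow_mem (corner_mem_cells_sdiff_hookRemoval hr)
    exact (mk_mem_cells_sdiff_hookRemoval.1 hj).1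

theorem reflTransGen_corner_of_mem_cells_sdiff_hookRemoval {i j : ℕ}
    (h : (i, j) ∈ μ.cells \ (μ.hookRemoval r).cells) :
    Relation.ReflTransGen
      (fun x y => x ∈ μ.cells \ (μ.hookRemoval r).cells ∧
        y ∈ μ.cells \ (μ.hookRemoval r).cells ∧ BoxAdj x y)
      (i, j) (μ.colLen 0 - 1, 0) := by
  -- Step left while the box below is not in the strip, otherwise step down.
  induction hm : μ.colLen 0 - 1 - i + j generalizing i j with
  | zero =>
    have := lt_colLen_zero_of_mem (mem_sdiff.1 h).1
    obtain ⟨rfl, rfl⟩ : i = μ.colLen 0 - 1 ∧ j = 0 := by omega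
    rfl
  | succ m ih =>
    have hmem := mk_mem_cells_sdiff_hookRemoval.1 h
    have hpos := μ.rowLen_pos_iff (i + 1)
    by_cases hleft : 0 < j ∧ μ.rowLen (i + 1) ≤ j
    · have h' : (i, j - 1) ∈ μ.cells \ (μ.hookRemoval r).cells :=
        mk_mem_cells_sdiff_hookRemoval.2 (by omega)
      exact .head ⟨h, h', by unfold BoxAdj; omega⟩ (ih h' (by omega))
    · have := μ.rowLen_anti (i + 1) (i + 1 + 1) (Nat.le_succ _)
      have h' : (i + 1, j) ∈ μ.cells \ (μ.hookRemoval r).cells :=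
        mk_mem_cells_sdiff_hookRemoval.2 (by omega)
      exact .head ⟨h, h', by unfold BoxAdj; omega⟩ (ih h' (by omega))

theorem isBorderStrip_cells_sdiff_hookRemoval (μ : YoungDiagram) (r : ℕ) :
    IsBorderStrip (μ.cells \ (μ.hookRemoval r).cells) := by
  refine ⟨fun ⟨a1, a2⟩ ha ⟨b1, b2⟩ hb => ?_, ?_⟩
  · have hb' := Relation.reflTransGen_swap.2 (reflTransGen_corner_of_mem_cells_sdiff_hookRemoval hb)
    exact (reflTransGen_corner_of_mem_cells_sdiff_hookRemoval ha).trans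
      (Relation.ReflTransGen.mono (fun _ _ ⟨hy, hx, hadj⟩ => ⟨hx, hy, hadj.symm⟩) _ _ hb')
  · rintro ⟨i, j, h₁, h₂, h₃, h₄⟩
    rw [mk_mem_cells_sdiff_hookRemoval] at h₁ h₂ h₃ h₄
    omega

theorem sum_Ico_rowLen_sub_rowLen_hookRemoval {k : ℕ} (hrk : r ≤ k) (hk : k < μ.colLen 0) :
    ∑ i ∈ Ico k (μ.colLen 0), (μ.rowLen i - (μ.hookRemoval r).rowLen i) =
      μ.rowLen k + (μ.colLen 0 - 1 - k) := by
  induction hd : μ.colLen 0 - k generalizing k with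
  | zero => omega
  | succ d ih =>
    rw [sum_eq_sum_Ico_succ_bot hk, rowLen_hookRemoval, if_neg (by omega)]
    have := μ.rowLen_anti k (k + 1) (Nat.le_succ k)
    have hpos := μ.rowLen_pos_iff (k + 1)
    rcases Nat.lt_or_ge (k + 1) (μ.colLen 0) with hk' | hk'
    · rw [ih (by omega) hk' (by omega)]
      omega
    · rw [Ico_eq_empty_of_le hk', sum_empty]
      omega

theorem card_cells_sdiff_hookRemoval (hr : (r, 0) ∈ μ) :
    #(μ.cells \ (μ.hookRemoval r).cells) = hookLen μ r 0 := by
  have hrℓ := mem_iff_lt_colLen.1 hr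
  have hrows_above : ∑ i ∈ range r, (μ.rowLen i - (μ.hookRemoval r).rowLen i) = 0 :=
    sum_eq_zero fun i hi => by
      rw [rowLen_hookRemoval, if_pos (mem_range.1 hi), Nat.sub_self]
  rw [card_cells_sdiff, ← sum_range_add_sum_Ico _ hrℓ.le, hrows_above, zero_add,
    sum_Ico_rowLen_sub_rowLen_hookRemoval le_rfl hrℓ, hookLen]
  have := mem_iff_lt_rowLen.1 hr
  omega

variable {ν : YoungDiagram}

theorem rowLen_eq_of_lt_topRow (hsub : ν ≤ μ) {i : ℕ}
    (hi : i < topRow (μ.cells \ ν.cells)) : ν.rowLen i = μ.rowLen i := by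
  have := rowLen_le_rowLen hsub i
  by_contra hne
  have := topRow_le (mk_mem_cells_sdiff.2 ⟨le_rfl, lt_of_le_of_ne this hne⟩)
  omega

theorem rowLen_succ_eq_of_isBorderStrip (hBS : IsBorderStrip (μ.cells \ ν.cells))
    (hstart : (μ.colLen 0 - 1, 0) ∈ μ.cells \ ν.cells) {i : ℕ}
    (hi : topRow (μ.cells \ ν.cells) ≤ i) (hi' : i + 1 < μ.colLen 0) :
    μ.rowLen (i + 1) = ν.rowLen i + 1 := by
  obtain ⟨_, htop⟩ := exists_topRow_mem hstart
  obtain ⟨j, hj, hj'⟩ :=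
    exists_vertical_step_of_reflTransGen (hBS.1 _ htop _ hstart) (i := i) hi (by dsimp; omega)
  rw [mk_mem_cells_sdiff] at hj hj'
  have := μ.rowLen_anti i (i + 1) (Nat.le_succ i)
  have := ν.rowLen_anti i (i + 1) (Nat.le_succ i)
  by_contra hne
  refine hBS.2 ⟨i, ν.rowLen i, ?_⟩
  simp only [mk_mem_cells_sdiff]
  omega

theorem eq_hookRemoval_topRow (hsub : ν ≤ μ) (hBS : IsBorderStrip (μ.cells \ ν.cells))
    (hstart : (μ.colLen 0 - 1, 0) ∈ μ.cells \ ν.cells) :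
    ν = μ.hookRemoval (topRow (μ.cells \ ν.cells)) := by
  refine ext_rowLen fun i => ?_
  rw [rowLen_hookRemoval]
  split_ifs with hi
  · exact rowLen_eq_of_lt_topRow hsub hi
  · have hlast := mk_mem_cells_sdiff.1 hstart
    have := rowLen_le_rowLen hsub i
    have hpos := μ.rowLen_pos_iff i
    have hpos' := μ.rowLen_pos_iff (i + 1)
    rcases Nat.lt_or_ge (i + 1) (μ.colLen 0) with hi' | hi'
    · rw [rowLen_succ_eq_of_isBorderStrip hBS hstart (not_lt.1 hi) hi']
      omega
    · rcases hi'.eq_or_lt with hi' | hi'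
      · obtain rfl : i = μ.colLen 0 - 1 := by omega
        omega
      · omega

theorem topRow_mem_of_corner_mem (hstart : (μ.colLen 0 - 1, 0) ∈ μ.cells \ ν.cells) :
    (topRow (μ.cells \ ν.cells), 0) ∈ μ := by
  have := topRow_le hstart
  have := lt_colLen_zero_of_mem (mem_sdiff.1 hstart).1
  exact mem_iff_lt_colLen.2 (by omega)

theorem card_cells_sdiff_of_isBorderStrip (hsub : ν ≤ μ)
    (hBS : IsBorderStrip (μ.cells \ ν.cells)) (hstart : (μ.colLen 0 - 1, 0) ∈ μ.cells \ ν.cells) :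
    #(μ.cells \ ν.cells) = hookLen μ (topRow (μ.cells \ ν.cells)) 0 := by
  have h := card_cells_sdiff_hookRemoval (topRow_mem_of_corner_mem hstart)
  rwa [← eq_hookRemoval_topRow hsub hBS hstart] at h

theorem rowLen_eq_of_isBorderStrip (hsub : ν ≤ μ) (hBS : IsBorderStrip (μ.cells \ ν.cells))
    (hstart : (μ.colLen 0 - 1, 0) ∈ μ.cells \ ν.cells) (i : ℕ) :
    ν.rowLen i = if i < topRow (μ.cells \ ν.cells) then μ.rowLen i else μ.rowLen (i + 1) - 1 :=
  (congrArg (rowLen · i) (eq_hookRemoval_topRow hsub hBS hstart)).trans (rowLen_hookRemoval ..)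

end YoungDiagram

open YoungDiagram in
theorem borderStrip_eq_hookRemoval_general (n : ℕ) (lam mu : YoungDiagram)
    (hsub : mu ≤ lam)
    (hBS : IsBorderStrip (lam.cells \ mu.cells))
    (hstart : (lam.colLen 0 - 1, 0) ∈ lam.cells \ mu.cells)
    (hsize : (lam.cells \ mu.cells).card = 2 * (lam.colLen 0 - n - 1)) :
    (∃ r, (r, 0) ∈ lam ∧ hookLen lam r 0 = 2 * (lam.colLen 0 - n - 1) ∧
      (∀ i, mu.rowLen i = if i < r then lam.rowLen i else lam.rowLen (i + 1) - 1)) ∧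
    (∀ r, (r, 0) ∈ lam →
      ∃! nu : YoungDiagram, nu ≤ lam ∧ IsBorderStrip (lam.cells \ nu.cells) ∧
        (lam.colLen 0 - 1, 0) ∈ lam.cells \ nu.cells ∧
        topRow (lam.cells \ nu.cells) = r) ∧
    (∀ r, (r, 0) ∈ lam → ∀ nu : YoungDiagram, nu ≤ lam →
      IsBorderStrip (lam.cells \ nu.cells) →
      (lam.colLen 0 - 1, 0) ∈ lam.cells \ nu.cells →
      topRow (lam.cells \ nu.cells) = r →
      (lam.cells \ nu.cells).card = hookLen lam r 0 ∧
      (∀ i, nu.rowLen i = if i < r then lam.rowLen i else lam.rowLen (i + 1) - 1)) := by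
  refine ⟨⟨_, topRow_mem_of_corner_mem hstart, ?_, rowLen_eq_of_isBorderStrip hsub hBS hstart⟩,
    fun r hr => ⟨lam.hookRemoval r, ?_, ?_⟩, ?_⟩
  · rw [← hsize, card_cells_sdiff_of_isBorderStrip hsub hBS hstart]
  · exact ⟨hookRemoval_le lam r, isBorderStrip_cells_sdiff_hookRemoval lam r,
      corner_mem_cells_sdiff_hookRemoval hr, topRow_cells_sdiff_hookRemoval hr⟩
  · rintro nu ⟨hle, hbs, hst, rfl⟩
    exact eq_hookRemoval_topRow hle hbs hst
  · rintro r - nu hle hbs hst rfl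
    exact ⟨card_cells_sdiff_of_isBorderStrip hle hbs hst, rowLen_eq_of_isBorderStrip hle hbs hst⟩

/-- Let `λ` be a partition with `ℓ(λ) > n` and suppose the symplectic
modification rule applies: the border strip `R_λ = λ \ μ` of size `2(ℓ(λ) - n - 1)`,
starting at the first box of the final row of `λ` (equivalently, the last box of the first
column), exists, is nonempty, and `μ = λ \ R_λ` is a partition.  Then:
(a) there is a box `b = (r, 0)` in the first column of `λ` whose hook length equals
`2(ℓ(λ) - n - 1)`, and `λ \ R_λ` is obtained by removing the hook of `b` and shifting all
boxes below the hook one step northwest (i.e. row `i` of `μ` has length `λ_{i+1}` for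
`i < r` and `λ_{i+2} - 1` for `i ≥ r`);
(b) the border strips `R` of `λ` starting at the last box of the first column with `λ \ R` a
partition are in bijection with the boxes of the first column of `λ` (`R ↦` the box in the
row where `R` ends), the strip corresponding to the box `(r,0)` having size equal to the hook
length of `(r,0)` and removal given by the hook-removal formula. -/
theorem borderStrip_eq_hookRemoval (n : ℕ) (lam mu : YoungDiagram)
    (hlen : n < lam.colLen 0) (hsub : mu ≤ lam)
    (hBS : IsBorderStrip (lam.cells \ mu.cells))
    (hstart : (lam.colLen 0 - 1, 0) ∈ lam.cells \ mu.cells)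
    (hsize : (lam.cells \ mu.cells).card = 2 * (lam.colLen 0 - n - 1))
    (hne : lam.cells \ mu.cells ≠ ∅) :
    (∃ r, (r, 0) ∈ lam ∧ hookLen lam r 0 = 2 * (lam.colLen 0 - n - 1) ∧
      (∀ i, mu.rowLen i = if i < r then lam.rowLen i else lam.rowLen (i + 1) - 1)) ∧
    (∀ r, (r, 0) ∈ lam →
      ∃! nu : YoungDiagram, nu ≤ lam ∧ IsBorderStrip (lam.cells \ nu.cells) ∧
        (lam.colLen 0 - 1, 0) ∈ lam.cells \ nu.cells ∧
        topRow (lam.cells \ nu.cells) = r) ∧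
    (∀ r, (r, 0) ∈ lam → ∀ nu : YoungDiagram, nu ≤ lam →
      IsBorderStrip (lam.cells \ nu.cells) →
      (lam.colLen 0 - 1, 0) ∈ lam.cells \ nu.cells →
      topRow (lam.cells \ nu.cells) = r →
      (lam.cells \ nu.cells).card = hookLen lam r 0 ∧
      (∀ i, nu.rowLen i = if i < r then lam.rowLen i else lam.rowLen (i + 1) - 1)) :=
  borderStrip_eq_hookRemoval_general n lam mu hsub hBS hstart hsize
end

section
/- Let n ≥ 1. For partitions λ, the symplectic modification rule via border strips agrees with the rule via the Weyl group of type BC_∞: for any partition λ with ℓ(λ) > n, if R_λ is the border strip of size 2(ℓ(λ) − n − 1) starting at the first box of the final row of λ, with c columns, and λ \ R_λ is a partition, then (s_{c−1} s_{c−2} ⋯ s_1 s_0) • λ† equals (λ \ R_λ)†, where • is the dot action with ρ = (−(n+1), −(n+2), …), s_0 • (a_1, a_2, …) = (2n + 2 − a_1, a_2, …), and s_i swaps-and-shifts coordinates i, i+1 via s_i • (…, a_i, a_{i+1}, …) = (…, a_{i+1} − 1, a_i + 1, …). -/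
/-! ### Partitions as integer sequences, the dot action, and border strips -/

/-- `ρ = (-1, -2, -3, …)`. -/
def seqRho (k : ℕ) : ℤ := -((k : ℤ) + 1)

/-- A permutation of `ℕ` acting on integer sequences by permuting positions:
`(w · f) k = f (w⁻¹ k)`. -/
def permSeq (w : Equiv.Perm ℕ) (f : ℕ → ℤ) : ℕ → ℤ := fun k => f (w.symm k)

/-- The dot action `w • f = w(f + ρ) - ρ` of the infinite symmetric group on integer
sequences, with `ρ = (-1, -2, …)`. -/
def dotP (w : Equiv.Perm ℕ) (f : ℕ → ℤ) : ℕ → ℤ :=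
  fun k => permSeq w (fun j => f j + seqRho j) k - seqRho k

/-- `w` is finitely supported (an element of the infinite symmetric group `𝔖`). -/
def FinPerm (w : Equiv.Perm ℕ) : Prop := {i | w i ≠ i}.Finite

/-- The Coxeter length of `w`: its number of inversions. -/
noncomputable def coxLen (w : Equiv.Perm ℕ) : ℕ :=
  Set.ncard {p : ℕ × ℕ | p.1 < p.2 ∧ w p.2 < w p.1}

/-- `f` is (the sequence of parts of) a partition: nonnegative, weakly decreasing, and
eventually zero. -/
def IsPartSeq (f : ℕ → ℤ) : Prop :=
  (∀ k, 0 ≤ f k) ∧ (∀ k, f (k + 1) ≤ f k) ∧ ∃ N, ∀ k ≥ N, f k = 0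

/-- `f` is regular for the dot action: some (necessarily unique) finitely supported `w`
makes `w • f` a partition. -/
def RegSeq (f : ℕ → ℤ) : Prop := ∃ w, FinPerm w ∧ IsPartSeq (dotP w f)

/-- The sequence of parts of a partition given as a list. -/
def seqOf (l : List ℕ) : ℕ → ℤ := fun k => (pPart l k : ℤ)

/-- The concatenated sequence `(λ |_n μ) = (λ_1, …, λ_n, μ_1, μ_2, …)`. -/
def catSeq (n : ℕ) (l m : List ℕ) : ℕ → ℤ :=
  fun k => if k < n then (pPart l k : ℤ) else (pPart m (k - n) : ℤ)

/-- The number of parts of a partition sequence. -/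
noncomputable def lenSeq (f : ℕ → ℤ) : ℕ := sInf {k | f k = 0}

/-- The set of boxes of the Young diagram of a partition sequence. -/
def cellsOf (f : ℕ → ℤ) : Set (ℕ × ℕ) := {c | (c.2 : ℤ) < f c.1}

/-- A set of boxes is edge-connected. -/
def IsConnSet (R : Set (ℕ × ℕ)) : Prop :=
  ∀ a ∈ R, ∀ b ∈ R, Relation.ReflTransGen (fun x y => x ∈ R ∧ y ∈ R ∧ BoxAdj x y) a b

/-- A set of boxes contains no `2 × 2` square. -/
def NoSquare (R : Set (ℕ × ℕ)) : Prop :=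
  ¬∃ i j, (i, j) ∈ R ∧ (i + 1, j) ∈ R ∧ (i, j + 1) ∈ R ∧ (i + 1, j + 1) ∈ R

/-- `B` is obtained from the partition (sequence) `A` by removing a border strip of size `s`
starting at the first box of the final row of `A`: `B` is a partition contained in `A`, and
`A \ B` is a connected skew diagram with no `2 × 2` square, of size `s`, containing the first
box of the final row of `A`. -/
def IsStripRemoval (A B : ℕ → ℤ) (s : ℕ) : Prop :=
  IsPartSeq B ∧ cellsOf B ⊆ cellsOf A ∧
  IsConnSet (cellsOf A \ cellsOf B) ∧ NoSquare (cellsOf A \ cellsOf B) ∧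
  (lenSeq A - 1, 0) ∈ cellsOf A \ cellsOf B ∧
  (cellsOf A \ cellsOf B).ncard = s

/-- `c(R)`: the number of columns occupied by the strip `A \ B`. -/
noncomputable def stripCols (A B : ℕ → ℤ) : ℕ :=
  (Prod.snd '' (cellsOf A \ cellsOf B)).ncard


/-- The dot action of the generator `s₀` of the type `BC_∞` Weyl group (for `Sp(2n)`, with
`ρ = (-(n+1), -(n+2), …)`): `s₀ • (a₁, a₂, …) = (2n + 2 - a₁, a₂, …)`. -/
def bcDotS0 (n : ℕ) (f : ℕ → ℤ) : ℕ → ℤ :=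
  Function.update f 0 (2 * (n : ℤ) + 2 - f 0)

/-- The dot action of the generator `s_{j+1}` (swapping the 0-indexed positions `j`, `j+1`):
`sᵢ • (…, aᵢ, a_{i+1}, …) = (…, a_{i+1} - 1, aᵢ + 1, …)`. -/
def bcDotSwap (j : ℕ) (f : ℕ → ℤ) : ℕ → ℤ :=
  fun k => if k = j then f (j + 1) - 1 else if k = j + 1 then f j + 1 else f k

/-- The dot action of the word `s_k ⋯ s₁ s₀` (applied right-to-left). -/
def bcWord (n : ℕ) : ℕ → (ℕ → ℤ) → (ℕ → ℤ)
  | 0 => bcDotS0 n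
  | k + 1 => fun f => bcDotSwap k (bcWord n k f)

/-- The sequence of column lengths `λ†` of a partition sequence. -/
noncomputable def conjSeq (f : ℕ → ℤ) : ℕ → ℤ :=
  fun i => (Set.ncard {r : ℕ | (i : ℤ) < f r} : ℤ)

/-!
Write `μ = λ \ R` and compare column lengths `λ†_j ≥ μ†_j`. Since `R` is connected and
contains the box `(ℓ(λ) - 1, 0)`, it occupies exactly the columns `0, …, c - 1`; since it has
no `2 × 2` square, consecutive columns of `R` share exactly one row, so `μ†_j = λ†_{j+1} - 1`
for `j < c - 1`, while `μ†_j = λ†_j` for `j ≥ c`. Summing the column lengths of `R` telescopes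
to `|R| = λ†_0 + (c - 1) - μ†_{c-1}`, and with `λ†_0 = ℓ(λ)` and `|R| = 2(ℓ(λ) - n - 1)` this
gives `μ†_{c-1} = 2n + 2 - λ†_0 + (c - 1)`. These are exactly the entries of
`(s_{c-1} ⋯ s₀) • λ†`: `s₀` turns `λ†_0` into `2n + 2 - λ†_0`, and each `sᵢ` then moves this
entry one place to the right, adding `1`, while the entry it passes moves left, losing `1`.
-/

noncomputable def colLen (f : ℕ → ℤ) (j : ℕ) : ℕ := sInf {r | f r ≤ j}

namespace IsPartSeq

variable {f : ℕ → ℤ}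

theorem antitone (hf : IsPartSeq f) : Antitone f := antitone_nat_of_succ_le hf.2.1

theorem lt_colLen_iff (hf : IsPartSeq f) {r j : ℕ} : r < colLen f j ↔ (j : ℤ) < f r := by
  have hup : IsUpperSet {r | f r ≤ (j : ℤ)} := fun a b hab ha => (hf.antitone hab).trans ha
  obtain ⟨N, hN⟩ := hf.2.2
  obtain hempty | ⟨a, ha⟩ := hup.eq_empty_or_Ici
  · exact absurd hempty (Set.nonempty_iff_ne_empty.mp ⟨N, by simp [hN N le_rfl]⟩)
  · have hr := Set.ext_iff.mp ha r
    simp only [Set.mem_ofPred_eq, Set.mem_Ici] at hr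
    rw [colLen, ha, csInf_Ici, ← not_le, ← not_le, hr]

theorem conjSeq_eq (hf : IsPartSeq f) (j : ℕ) : conjSeq f j = colLen f j := by
  have hset : {r : ℕ | (j : ℤ) < f r} = Set.Iio (colLen f j) := by
    ext r
    exact hf.lt_colLen_iff.symm
  rw [conjSeq, hset, Set.ncard_Iio_nat]

theorem colLen_antitone (hf : IsPartSeq f) : Antitone (colLen f) := by
  intro i j hij
  by_contra! h
  have hj := hf.lt_colLen_iff.mp h
  have hi := hf.lt_colLen_iff.not.mp (lt_irrefl (colLen f i))
  omega

theorem lenSeq_eq (hf : IsPartSeq f) : lenSeq f = colLen f 0 := by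
  unfold lenSeq colLen
  congr 1
  ext k
  simp only [Set.mem_ofPred_eq, Nat.cast_zero]
  exact ⟨fun h => h.le, fun h => h.antisymm (hf.1 k)⟩

theorem conjSeq_zero (hf : IsPartSeq f) : conjSeq f 0 = lenSeq f := by
  rw [hf.conjSeq_eq, hf.lenSeq_eq]

end IsPartSeq

theorem bcWord_apply (n k : ℕ) (f : ℕ → ℤ) (i : ℕ) :
    bcWord n k f i =
      if i < k then f (i + 1) - 1 else if i = k then 2 * (n : ℤ) + 2 - f 0 + k else f i := by
  induction k generalizing i with
  | zero =>
    rcases eq_or_ne i 0 with rfl | hi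
    · simp [bcWord, bcDotS0]
    · simp [bcWord, bcDotS0, hi]
  | succ k ih =>
    simp only [bcWord, bcDotSwap, ih]
    split_ifs <;> subst_vars <;> omega

section BoxPaths

variable {R : Set (ℕ × ℕ)}

theorem uIcc_snd_subset_of_reflTransGen {x y : ℕ × ℕ}
    (h : Relation.ReflTransGen (fun u v => u ∈ R ∧ v ∈ R ∧ BoxAdj u v) x y) (hx : x ∈ R) :
    Set.uIcc x.2 y.2 ⊆ Prod.snd '' R := by
  induction h with
  | refl => simpa using ⟨x.1, hx⟩
  | tail _ hyz ih =>
    rename_i y z _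
    obtain ⟨hy, hz, hadj⟩ := hyz
    refine Set.uIcc_subset_uIcc_union_uIcc.trans (Set.union_subset ih ?_)
    intro j hj
    rw [Set.mem_uIcc] at hj
    have : j = y.2 ∨ j = z.2 := by unfold BoxAdj at hadj; omega
    rcases this with rfl | rfl
    exacts [⟨y, hy, rfl⟩, ⟨z, hz, rfl⟩]

theorem IsConnSet.ordConnected_image_snd (h : IsConnSet R) : (Prod.snd '' R).OrdConnected :=
  Set.ordConnected_iff_uIcc_subset.2 fun _ ⟨x, hx, hx2⟩ _ ⟨y, hy, hy2⟩ =>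
    hx2 ▸ hy2 ▸ uIcc_snd_subset_of_reflTransGen (h x hx y hy) hx

theorem exists_horizontal_domino_of_reflTransGen {x y : ℕ × ℕ} {j : ℕ}
    (h : Relation.ReflTransGen (fun u v => u ∈ R ∧ v ∈ R ∧ BoxAdj u v) x y)
    (hx : j < x.2) (hy : y.2 ≤ j) : ∃ r, (r, j) ∈ R ∧ (r, j + 1) ∈ R := by
  induction h with
  | refl => omega
  | tail _ hyz ih =>
    rename_i y z _
    obtain ⟨hy', hz, hadj⟩ := hyz
    by_cases hyj : y.2 ≤ j
    · exact ih hyj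
    · obtain ⟨y1, y2⟩ := y
      obtain ⟨z1, z2⟩ := z
      obtain ⟨rfl, rfl, rfl⟩ : y1 = z1 ∧ y2 = j + 1 ∧ z2 = j := by
        unfold BoxAdj at hadj
        dsimp only at hadj hyj
        omega
      exact ⟨y1, hz, hy'⟩

end BoxPaths

theorem sum_range_succ_sub_eq_of_add_one_eq (a b : ℕ → ℤ) {m : ℕ}
    (h : ∀ j < m, b j + 1 = a (j + 1)) :
    ∑ j ∈ Finset.range (m + 1), (a j - b j) = a 0 + m - b m := by
  induction m with
  | zero => simp
  | succ m ih =>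
    rw [Finset.sum_range_succ, ih fun j hj => h j (by omega), ← h m (by omega)]
    push_cast
    ring

section StripRemoval

variable {A B : ℕ → ℤ}

theorem mem_cellsOf_diff_iff (hA : IsPartSeq A) (hB : IsPartSeq B) {r j : ℕ} :
    (r, j) ∈ cellsOf A \ cellsOf B ↔ colLen B j ≤ r ∧ r < colLen A j := by
  simp only [cellsOf, Set.mem_sdiff, Set.mem_ofPred_eq, ← hA.lt_colLen_iff, ← hB.lt_colLen_iff,
    not_lt]
  exact and_comm

theorem colLen_le_of_cellsOf_subset (hA : IsPartSeq A) (hB : IsPartSeq B)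
    (hsub : cellsOf B ⊆ cellsOf A) (j : ℕ) : colLen B j ≤ colLen A j := by
  by_contra! h
  have : (colLen A j, j) ∈ cellsOf A := hsub (hB.lt_colLen_iff.mp h)
  exact lt_irrefl _ (hA.lt_colLen_iff.mpr this)

theorem mem_image_snd_diff_iff (hA : IsPartSeq A) (hB : IsPartSeq B) {j : ℕ} :
    j ∈ Prod.snd '' (cellsOf A \ cellsOf B) ↔ colLen B j < colLen A j := by
  constructor
  · rintro ⟨⟨r, j⟩, h, rfl⟩
    obtain ⟨h1, h2⟩ := (mem_cellsOf_diff_iff hA hB).mp h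
    exact h1.trans_lt h2
  · intro h
    exact ⟨(colLen B j, j), (mem_cellsOf_diff_iff hA hB).mpr ⟨le_rfl, h⟩, rfl⟩

theorem image_snd_diff_eq_Iio (hA : IsPartSeq A) (hB : IsPartSeq B)
    (hconn : IsConnSet (cellsOf A \ cellsOf B)) {r : ℕ} (hr : (r, 0) ∈ cellsOf A \ cellsOf B) :
    Prod.snd '' (cellsOf A \ cellsOf B) = Set.Iio (stripCols A B) := by
  set S := Prod.snd '' (cellsOf A \ cellsOf B)
  have hlower : IsLowerSet S := fun j i hij hj =>
    hconn.ordConnected_image_snd.out ⟨_, hr, rfl⟩ hj ⟨Nat.zero_le i, hij⟩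
  have hfin : S.Finite := by
    refine (Set.finite_Iio (A 0).toNat).subset fun j hj => ?_
    have := hA.lt_colLen_iff.mp (Nat.zero_lt_of_lt ((mem_image_snd_diff_iff hA hB).mp hj))
    simp only [Set.mem_Iio]
    omega
  obtain huniv | ⟨c, hc⟩ := hlower.eq_univ_or_Iio
  · exact absurd (huniv ▸ hfin) Set.infinite_univ
  · have hcard : S.ncard = c := by rw [hc, Set.ncard_Iio_nat]
    exact hc.trans (congrArg Set.Iio hcard.symm)

theorem colLen_add_one_eq (hA : IsPartSeq A) (hB : IsPartSeq B)
    (hconn : IsConnSet (cellsOf A \ cellsOf B)) (hsq : NoSquare (cellsOf A \ cellsOf B))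
    {j : ℕ} (hj : colLen B j < colLen A j) (hj' : colLen B (j + 1) < colLen A (j + 1)) :
    colLen B j + 1 = colLen A (j + 1) := by
  have hmem := fun r i => mem_cellsOf_diff_iff (r := r) (j := i) hA hB
  obtain ⟨r, hr, hr'⟩ := exists_horizontal_domino_of_reflTransGen
    (hconn _ ((hmem _ _).mpr ⟨le_rfl, hj'⟩) _ ((hmem _ _).mpr ⟨le_rfl, hj⟩))
    (Nat.lt_succ_self j) le_rfl
  have hr := (hmem r j).mp hr
  have hr' := (hmem r (j + 1)).mp hr'
  have hA' := hA.colLen_antitone (Nat.le_add_right j 1)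
  have hB' := hB.colLen_antitone (Nat.le_add_right j 1)
  by_contra hne
  -- otherwise the bottom two boxes of column `j + 1` and their left neighbours form a square
  refine hsq ⟨colLen A (j + 1) - 2, j, ?_, ?_, ?_, ?_⟩ <;> rw [hmem] <;> omega

theorem ncard_diff_eq_sum (hA : IsPartSeq A) (hB : IsPartSeq B) {c : ℕ}
    (hc : ∀ j, c ≤ j → colLen B j = colLen A j) :
    (cellsOf A \ cellsOf B).ncard = ∑ j ∈ Finset.range c, (colLen A j - colLen B j) := by
  have hD : cellsOf A \ cellsOf B = ↑((Finset.range c).biUnion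
      fun j => Finset.Ico (colLen B j) (colLen A j) ×ˢ {j}) := by
    ext ⟨r, j⟩
    simp only [Finset.coe_biUnion, Set.mem_iUnion, Finset.mem_coe, Finset.mem_product,
      Finset.mem_Ico, Finset.mem_singleton, Finset.mem_range, mem_cellsOf_diff_iff hA hB]
    constructor
    · intro h
      refine ⟨j, ?_, h, rfl⟩
      by_contra! hj
      have := hc j hj
      omega
    · rintro ⟨_, _, h, rfl⟩
      exact h
  rw [hD, Set.ncard_coe_finset, Finset.card_biUnion]
  · simp
  · intro i _ j _ hij
    exact Finset.disjoint_product.mpr (Or.inr (Finset.disjoint_singleton.mpr hij))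

theorem IsStripRemoval.conjSeq_apply (hA : IsPartSeq A) {s : ℕ} (h : IsStripRemoval A B s)
    (i : ℕ) : conjSeq B i =
      if i < stripCols A B - 1 then conjSeq A (i + 1) - 1
      else if i = stripCols A B - 1 then lenSeq A + (stripCols A B - 1 : ℕ) - s
      else conjSeq A i := by
  obtain ⟨hB, hsub, hconn, hsq, hcell, hcard⟩ := h
  set c := stripCols A B
  have hcol (j : ℕ) : colLen B j < colLen A j ↔ j < c := by
    rw [← mem_image_snd_diff_iff hA hB, image_snd_diff_eq_Iio hA hB hconn hcell, Set.mem_Iio]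
  have hc : 1 ≤ c := (hcol 0).mp ((mem_image_snd_diff_iff hA hB).mp ⟨_, hcell, rfl⟩)
  have hle := colLen_le_of_cellsOf_subset hA hB hsub
  have hstep (j : ℕ) (hj : j + 1 < c) : colLen B j + 1 = colLen A (j + 1) :=
    colLen_add_one_eq hA hB hconn hsq ((hcol j).mpr (by omega)) ((hcol _).mpr hj)
  have hsame (j : ℕ) (hj : c ≤ j) : colLen B j = colLen A j :=
    (hle j).antisymm (not_lt.mp ((hcol j).not.mpr (by omega)))
  have hsize : (s : ℤ) = lenSeq A + (c - 1 : ℕ) - colLen B (c - 1) := by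
    rw [← hcard, ncard_diff_eq_sum hA hB hsame, Nat.cast_sum,
      Finset.sum_congr rfl fun j _ => Nat.cast_sub (hle j), ← Nat.sub_add_cancel hc,
      sum_range_succ_sub_eq_of_add_one_eq _ _ fun j hj => by exact_mod_cast hstep j (by omega),
      hA.lenSeq_eq, Nat.add_sub_cancel]
  simp only [hA.conjSeq_eq, hB.conjSeq_eq]
  split_ifs with h1 h2
  · have := hstep i (by omega)
    omega
  · subst h2
    omega
  · have := hsame i (by omega)
    omega

end StripRemoval

theorem borderStrip_eq_weylGroup_symplectic_general (n : ℕ) (A B : ℕ → ℤ)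
    (hA : IsPartSeq A) (hlen : n < lenSeq A)
    (hrem : IsStripRemoval A B (2 * (lenSeq A - n - 1)))
    (c : ℕ) (hc : c = stripCols A B) :
    bcWord n (c - 1) (conjSeq A) = conjSeq B := by
  subst hc
  funext i
  rw [bcWord_apply, hrem.conjSeq_apply hA, hA.conjSeq_zero]
  split_ifs <;> omega

/-- The symplectic modification rule via border strips agrees with the
rule via the type `BC_∞` Weyl group: if `λ` is a partition with `ℓ(λ) > n` and `R_λ` is the
(nonempty) border strip of size `2(ℓ(λ) - n - 1)` starting at the first box of the final row
of `λ`, with `c` columns and with `λ \ R_λ` a partition, then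
`(s_{c-1} ⋯ s₁ s₀) • λ† = (λ \ R_λ)†` for the dot action with `ρ = (-(n+1), -(n+2), …)`. -/
theorem borderStrip_eq_weylGroup_symplectic (n : ℕ) (A B : ℕ → ℤ)
    (hA : IsPartSeq A) (hlen : n < lenSeq A)
    (hpos : 0 < 2 * (lenSeq A - n - 1))
    (hrem : IsStripRemoval A B (2 * (lenSeq A - n - 1)))
    (c : ℕ) (hc : c = stripCols A B) :
    bcWord n (c - 1) (conjSeq A) = conjSeq B :=
  borderStrip_eq_weylGroup_symplectic_general n A B hA hlen hrem c hc
end
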